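/- arXiv:math/9409217 — 2 statements merged into one kernel-verified Lean document; each statement's English description precedes it below -/
import Mathlib

section
/- For Δ ≥ D ≥ 2r+2, the diameter of Γ_Δ(D,−r) is at most D+r: from the vertex I = 12⋯D there is a directed path of length at most D+r to every vertex X. -/
/-- `l` is a vertex of the cycle prefix digraph `Γ_Δ(D)`: a sequence of `D`
distinct letters from the alphabet `{1, …, Δ+1}`. -/
def IsVtx (Δ D : ℕ) (l : List ℕ) : Prop :=
  l.length = D ∧ l.Nodup ∧ ∀ x ∈ l, 1 ≤ x ∧ x ≤ Δ + 1

/-- Adjacency in `Γ_Δ(D, -r)` (for `r = 0` this is `Γ_Δ(D)` itself): arcs are the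
rotations `R_k` for `r+2 ≤ k ≤ D` (0-indexed: move the letter at index `j`,
`r+1 ≤ j ≤ D-1`, to the front) and the shifts `S_y` for letters `y` not in the
sequence. -/
def adjR (Δ D r : ℕ) (X Y : List ℕ) : Prop :=
  IsVtx Δ D X ∧ IsVtx Δ D Y ∧
    ((∃ j, r + 1 ≤ j ∧ j < D ∧ Y = X.getD j 0 :: X.eraseIdx j) ∨
     (∃ y, y ∉ X ∧ Y = y :: X.dropLast))

/-- `w` is a directed walk of length `n` from `u` to `v` in the digraph with
adjacency relation `A`. -/
def IsWalk {V : Type*} (A : V → V → Prop) (u v : V) (n : ℕ) (w : ℕ → V) : Prop :=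
  w 0 = u ∧ w n = v ∧ ∀ i < n, A (w i) (w (i + 1))

/-- Directed distance: the least length of a directed walk from `u` to `v`. -/
noncomputable def cpDist {V : Type*} (A : V → V → Prop) (u v : V) : ℕ :=
  sInf {n | ∃ w, IsWalk A u v n w}

/-! A walk from `1 2 ⋯ D` to `X` is built by putting letters in front one at a time: a letter
already in the word has to come from a position `≥ r + 1`, any other letter is shifted in.
Write `X = L ++ T`, where `T = [1]` if `X` ends in `1` (that letter is never moved) and `T = []`
otherwise, and let `m = |L| - (r + 1)`. First at most `r` letters of `L.take m` are put in front,
greedily, until `r` of them are there or each remaining one sits at a position `≤ r`. Then the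
letters of `L` are put in front, last first, in `|L|` steps. Only the last `r + 1` letters of `L`
are placed while fewer than `r + 1` letters are in front; counting the letters that can occupy the
first `r + 1` positions shows that after the first phase these letters lie deep enough to be
rotated, and from then on a letter's position never decreases. -/

open scoped List

section Walks

variable {V : Type*} {A : V → V → Prop} {u v v' : V} {n : ℕ}

def ReachIn (A : V → V → Prop) (u v : V) (n : ℕ) : Prop :=
  ∃ w, IsWalk A u v n w

theorem ReachIn.refl (u : V) : ReachIn A u u 0 :=
  ⟨fun _ => u, rfl, rfl, fun _ hi => absurd hi (Nat.not_lt_zero _)⟩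

theorem ReachIn.tail (h : ReachIn A u v n) (hA : A v v') : ReachIn A u v' (n + 1) := by
  obtain ⟨w, hw0, hwn, hw⟩ := h
  refine ⟨fun i => if i ≤ n then w i else v', by simpa using hw0, by simp, fun i hi => ?_⟩
  rcases Nat.lt_or_ge i n with hin | hin
  · simpa [hin.le, Nat.succ_le_of_lt hin] using hw i hin
  · obtain rfl : i = n := by omega
    simpa [hwn] using hA

end Walks

section Vacate

variable {α : Type*} [DecidableEq α] {W A B : List α} {v w : α}

/-- The arcs of `Γ_Δ(D, -r)` are the moves `W ↦ v :: vacate W v`: rotations when `v ∈ W`,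
shifts otherwise. -/
def vacate (W : List α) (v : α) : List α :=
  if v ∈ W then W.erase v else W.dropLast

theorem vacate_sublist : vacate W v <+ W := by
  unfold vacate; split_ifs
  exacts [W.erase_sublist, W.dropLast_sublist]

theorem length_vacate_add_one (hW : W ≠ []) : (vacate W v).length + 1 = W.length := by
  have := List.length_pos_of_ne_nil hW
  unfold vacate; split_ifs with hv
  · rw [List.length_erase_of_mem hv]; omega
  · rw [List.length_dropLast]; omega

theorem notMem_vacate (hW : W.Nodup) : v ∉ vacate W v := by
  unfold vacate; split_ifs with hv
  exacts [hW.not_mem_erase, fun h => hv (W.dropLast_sublist.subset h)]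

theorem vacate_append (hv : v ∉ A) (hB : B ≠ []) : vacate (A ++ B) v = A ++ vacate B v := by
  by_cases hvB : v ∈ B
  · simp [vacate, hvB, List.erase_append_right _ hv]
  · simp [vacate, hv, hvB, List.dropLast_append_of_ne_nil hB]

theorem idxOf_le_idxOf_vacate_add_one (hW : W.Nodup) (hw : w ∈ vacate W v) :
    W.idxOf w ≤ (vacate W v).idxOf w + 1 := by
  unfold vacate at hw ⊢
  split_ifs at hw ⊢ with hv
  · obtain ⟨A, B, hvA, rfl, hAB⟩ := List.exists_erase_eq hv
    rw [hAB] at hw ⊢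
    have hwv : w ≠ v := by
      rintro rfl
      exact (List.nodup_cons.mp (List.nodup_middle.mp hW)).1 hw
    by_cases hwA : w ∈ A
    · simp [List.idxOf_append_of_mem hwA]
    · simp [List.idxOf_append_of_notMem hwA, List.idxOf_cons_ne _ (Ne.symm hwv)]
      omega
  · rw [(W.dropLast_prefix).idxOf_eq_of_mem hw]; omega

end Vacate

section Moves

variable {Δ D r : ℕ} {U W R : List ℕ} {v n : ℕ}

theorem IsVtx.of_reachIn (hU : IsVtx Δ D U) (h : ReachIn (adjR Δ D r) U W n) : IsVtx Δ D W := by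
  obtain ⟨w, hw0, hwn, hw⟩ := h
  cases n with
  | zero => rwa [← hwn, hw0]
  | succ n => exact hwn ▸ (hw n n.lt_succ_self).2.1

theorem adjR_cons_vacate (hW : IsVtx Δ D W) (hD : 0 < D) (hv : 1 ≤ v ∧ v ≤ Δ + 1)
    (hidx : v ∈ W → r + 1 ≤ W.idxOf v) : adjR Δ D r W (v :: vacate W v) := by
  obtain ⟨hlen, hnd, hbd⟩ := hW
  have hW0 : W ≠ [] := List.ne_nil_of_length_pos (hlen ▸ hD)
  refine ⟨⟨hlen, hnd, hbd⟩, ⟨?_, ?_, ?_⟩, ?_⟩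
  · simp [length_vacate_add_one hW0, hlen]
  · exact List.nodup_cons.mpr ⟨notMem_vacate hnd, hnd.sublist vacate_sublist⟩
  · intro x hx
    rcases List.mem_cons.mp hx with rfl | hx
    exacts [hv, hbd x (vacate_sublist.subset hx)]
  · by_cases hvW : v ∈ W
    · refine .inl ⟨W.idxOf v, hidx hvW, hlen ▸ List.idxOf_lt_length_of_mem hvW, ?_⟩
      rw [List.getD_eq_getElem _ _ (List.idxOf_lt_length_of_mem hvW), List.getElem_idxOf,
        List.eraseIdx_idxOf_eq_erase, vacate, if_pos hvW]
    · exact .inr ⟨v, hvW, by rw [vacate, if_neg hvW]⟩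

theorem isVtx_range' (hΔ : D ≤ Δ) : IsVtx Δ D (List.range' 1 D) :=
  ⟨List.length_range', List.nodup_range', fun x hx => by rw [List.mem_range'_1] at hx; omega⟩

theorem eq_one_cons_of_sublist_range' (hR : R <+ List.range' 1 D) (h1 : 1 ∈ R) :
    R = 1 :: R.tail := by
  cases D with
  | zero => simp_all
  | succ D =>
    rw [List.range'_succ, List.sublist_cons_iff] at hR
    rcases hR with hR | ⟨R', rfl, -⟩
    · simpa [List.mem_range'_1] using hR.subset h1
    · rfl

theorem one_mem_vacate (hR : R <+ List.range' 1 D) (h1 : 1 ∈ R) (hv : v ≠ 1)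
    (hlen : 2 ≤ R.length) : 1 ∈ vacate R v := by
  rw [eq_one_cons_of_sublist_range' hR h1] at hlen ⊢
  have hne : R.tail ≠ [] := by rintro h; rw [h] at hlen; simp at hlen
  rw [← List.singleton_append, vacate_append (by simpa using hv) hne]
  simp

end Moves

theorem List.Nodup.exists_eq_append_of_getLast?_ne {α : Type*} {X : List α} (hX : X.Nodup)
    (a : α) : ∃ L T, X = L ++ T ∧ T <+ [a] ∧ L.getLast? ≠ some a := by
  by_cases h : X.getLast? = some a
  · obtain ⟨L, rfl⟩ := List.getLast?_eq_some_iff.mp h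
    refine ⟨L, [a], rfl, .refl _, fun hL => ?_⟩
    exact List.disjoint_of_nodup_append hX (List.mem_of_getLast? hL) (List.mem_singleton_self a)
  · exact ⟨X, [], by simp, List.nil_sublist _, h⟩

theorem List.Nodup.getElem_mem_take_iff {α : Type*} [DecidableEq α] {l : List α} (hl : l.Nodup)
    {k j : ℕ} (hk : k < l.length) : l[k] ∈ l.take j ↔ k < j := by
  rw [List.mem_take_iff_idxOf_lt (List.getElem_mem hk), hl.idxOf_getElem]

theorem List.Nodup.getElem_notMem_drop {α : Type*} {l : List α} (hl : l.Nodup) {k : ℕ}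
    (hk : k < l.length) : l[k] ∉ l.drop (k + 1) := by
  have := hl.sublist (List.drop_sublist k l)
  rw [List.drop_eq_getElem_cons hk] at this
  exact (List.nodup_cons.mp this).1

theorem List.subset_take_of_subset_take_add_one {α : Type*} {l E : List α} {k : ℕ}
    (hk : k < l.length) (hE : E ⊆ l.take (k + 1)) (hkE : l[k] ∉ E) : E ⊆ l.take k := by
  intro x hx
  have := hE hx
  rw [← List.take_concat_get' l k hk] at this
  exact (List.mem_append.mp this).resolve_right fun h => hkE (List.mem_singleton.mp h ▸ hx)

section Loading

variable {Δ D r m : ℕ} {L T E R : List ℕ} {v : ℕ}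

theorem IsVtx.length_bounds (hX : IsVtx Δ D (L ++ T)) (hT : T <+ [1]) :
    L.length ≤ D ∧ D ≤ L.length + 1 ∧ (1 ∈ L → L.length = D) := by
  have hlen : L.length + T.length = D := by simpa using hX.1
  rcases List.sublist_singleton.mp hT with rfl | rfl
  · simp_all
  · simp only [List.length_singleton] at hlen
    exact ⟨by omega, by omega, fun h1 => absurd (List.mem_singleton_self 1)
      (List.disjoint_of_nodup_append hX.2.1 h1)⟩

structure LoadState (Δ D r : ℕ) (L : List ℕ) (m : ℕ) (E R : List ℕ) : Prop where
  reach : ReachIn (adjR Δ D r) (List.range' 1 D) (E ++ R) E.length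
  sublist : R <+ List.range' 1 D
  subset_early : E ⊆ L.take m
  length_le : E.length ≤ r
  one_mem : 1 ∈ R

def Blocked (r : ℕ) (L : List ℕ) (m : ℕ) (E R : List ℕ) : Prop :=
  ∀ v ∈ L.take m, v ∉ E → v ∈ R ∧ E.length + R.idxOf v ≤ r

theorem LoadState.init (hD : 0 < D) : LoadState Δ D r L m [] (List.range' 1 D) :=
  ⟨ReachIn.refl _, .refl _, List.nil_subset _, Nat.zero_le r,
    List.mem_range'_1.mpr ⟨le_rfl, by omega⟩⟩

theorem LoadState.isVtx (hΔ : D ≤ Δ) (h : LoadState Δ D r L m E R) : IsVtx Δ D (E ++ R) :=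
  (isVtx_range' hΔ).of_reachIn h.reach

theorem LoadState.idxOf_one (h : LoadState Δ D r L m E R) : R.idxOf 1 = 0 := by
  rw [eq_one_cons_of_sublist_range' h.sublist h.one_mem, List.idxOf_cons_self]

theorem LoadState.step (hX : IsVtx Δ D (L ++ T)) (hD : 2 * r + 2 ≤ D) (hΔ : D ≤ Δ)
    (h : LoadState Δ D r L m E R) (hE : E.length < r) (hv : v ∈ L.take m) (hvE : v ∉ E)
    (hvR : v ∈ R → r + 1 ≤ E.length + R.idxOf v) :
    LoadState Δ D r L m (v :: E) (vacate R v) := by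
  have hW := h.isVtx hΔ
  have hR : R ≠ [] := List.ne_nil_of_mem h.one_mem
  have hv1 : v ≠ 1 := by
    rintro rfl
    have := hvR h.one_mem
    rw [h.idxOf_one] at this
    omega
  have hadj := adjR_cons_vacate (r := r) hW (by omega)
    (hX.2.2 v (List.mem_append_left T (List.take_subset m L hv))) fun hvW => by
      rw [List.idxOf_append_of_notMem hvE]
      exact hvR ((List.mem_append.mp hvW).resolve_left hvE)
  rw [vacate_append hvE hR] at hadj
  refine ⟨by simpa using h.reach.tail hadj, vacate_sublist.trans h.sublist,
    List.cons_subset.mpr ⟨hv, h.subset_early⟩, by simp; omega,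
    one_mem_vacate h.sublist h.one_mem hv1 ?_⟩
  have := hW.1
  simp only [List.length_append] at this
  omega

theorem LoadState.exists_full_or_blocked (hX : IsVtx Δ D (L ++ T)) (hD : 2 * r + 2 ≤ D)
    (hΔ : D ≤ Δ) {E R : List ℕ} (h : LoadState Δ D r L m E R) :
    ∃ E' R', LoadState Δ D r L m E' R' ∧ (E'.length = r ∨ Blocked r L m E' R') := by
  by_cases hfull : E.length = r
  · exact ⟨E, R, h, .inl hfull⟩
  by_cases hb : Blocked r L m E R
  · exact ⟨E, R, h, .inr hb⟩
  obtain ⟨v, hv, hvE, hvR⟩ :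
      ∃ v ∈ L.take m, v ∉ E ∧ (v ∈ R → r + 1 ≤ E.length + R.idxOf v) := by
    simp only [Blocked, not_forall, not_and_or, not_le] at hb
    obtain ⟨v, hv, hvE, hvR⟩ := hb
    exact ⟨v, hv, hvE, fun hvR' => by simpa [hvR'] using hvR⟩
  have := h.length_le
  exact (h.step hX hD hΔ (by omega) hv hvE hvR).exists_full_or_blocked hX hD hΔ
termination_by r - E.length

theorem LoadState.insert_one_sdiff_subset (h : LoadState Δ D r L m E R)
    (hb : Blocked r L m E R) :
    insert 1 ((L.take m).toFinset \ E.toFinset) ⊆ (R.take (r + 1 - E.length)).toFinset := by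
  intro x hx
  rw [List.mem_toFinset]
  rcases Finset.mem_insert.mp hx with rfl | hx
  · rw [List.mem_take_iff_idxOf_lt h.one_mem, h.idxOf_one]
    have := h.length_le
    omega
  · simp only [Finset.mem_sdiff, List.mem_toFinset] at hx
    obtain ⟨hxR, hxE⟩ := hb x hx.1 hx.2
    rw [List.mem_take_iff_idxOf_lt hxR]
    omega

theorem LoadState.card_insert_one_sdiff (hX : IsVtx Δ D (L ++ T)) (hΔ : D ≤ Δ)
    (hm : m ≤ L.length) (h : LoadState Δ D r L m E R) :
    (insert 1 ((L.take m).toFinset \ E.toFinset)).card =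
      m - E.length + if 1 ∈ L.take m then 0 else 1 := by
  have hER := (h.isVtx hΔ).2.1
  have hL : (L.take m).Nodup := hX.2.1.of_append_left.sublist (L.take_sublist m)
  have hE : E.toFinset ⊆ (L.take m).toFinset := fun x hx => by
    simpa using h.subset_early (List.mem_toFinset.mp hx)
  have h1E : 1 ∉ E := fun h1 => List.disjoint_of_nodup_append hER h1 h.one_mem
  rw [Finset.card_insert_eq_ite, Finset.card_sdiff_of_subset hE,
    List.toFinset_card_of_nodup hL, List.toFinset_card_of_nodup hER.of_append_left,
    List.length_take_of_le hm]
  split_ifs <;> simp_all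

theorem LoadState.one_mem_take_of_blocked (hX : IsVtx Δ D (L ++ T)) (hT : T <+ [1])
    (hD : 2 * r + 2 ≤ D) (hΔ : D ≤ Δ) (hm : m + (r + 1) = L.length)
    (h : LoadState Δ D r L m E R) (hb : Blocked r L m E R) (h1 : 1 ∈ L) : 1 ∈ L.take m := by
  by_contra h1m
  have hcard := Finset.card_le_card (h.insert_one_sdiff_subset hb)
  rw [h.card_insert_one_sdiff hX hΔ (by omega), if_neg h1m] at hcard
  have := (List.toFinset_card_le _).trans (List.length_take_le (r + 1 - E.length) R)
  have := (hX.length_bounds hT).2.2 h1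
  have := h.length_le
  omega

theorem LoadState.le_idxOf_of_blocked (hX : IsVtx Δ D (L ++ T)) (hT : T <+ [1])
    (hD : 2 * r + 2 ≤ D) (hΔ : D ≤ Δ) (hm : m + (r + 1) = L.length)
    (h : LoadState Δ D r L m E R) (hb : Blocked r L m E R) (hvR : v ∈ R) (hv1 : v ≠ 1)
    (hvm : v ∉ L.take m) : r + 1 ≤ E.length + R.idxOf v := by
  by_contra hlt
  -- `v`, `1` and the letters of `L.take m \ E` would crowd the first `r + 1 - |E|` places of `R`
  have hsub : insert v (insert 1 ((L.take m).toFinset \ E.toFinset)) ⊆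
      (R.take (r + 1 - E.length)).toFinset := by
    refine Finset.insert_subset ?_ (h.insert_one_sdiff_subset hb)
    rw [List.mem_toFinset, List.mem_take_iff_idxOf_lt hvR]
    omega
  have hcard := Finset.card_le_card hsub
  rw [Finset.card_insert_of_notMem (by simp [hv1, hvm]),
    h.card_insert_one_sdiff hX hΔ (by omega)] at hcard
  have := (List.toFinset_card_le _).trans (List.length_take_le (r + 1 - E.length) R)
  have hL := hX.length_bounds hT
  have := h.length_le
  split_ifs at hcard with h1m
  · have := hL.2.2 (List.take_subset m L h1m)
    omega
  · omega

end Loading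

section Countdown

variable {Δ D r m : ℕ} {L T E R : List ℕ} {k n : ℕ}

/-- Once `L.drop k` has been put in front, the word is `L.drop k ++ E ++ R`. The letters of
`L.take k` outside `L.take m` are placed while fewer than `r + 1` letters are in front, which is
why they have to sit deep in `R`. -/
structure CountdownState (Δ D r : ℕ) (L : List ℕ) (m : ℕ) (T : List ℕ) (k : ℕ)
    (E R : List ℕ) (n : ℕ) : Prop where
  le_length : k ≤ L.length
  steps : n ≤ r + (L.length - k)
  reach : ReachIn (adjR Δ D r) (List.range' 1 D) (L.drop k ++ E ++ R) n
  sublist : R <+ List.range' 1 D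
  tail : T <+ R
  subset_take : E ⊆ L.take k
  subset_early : E ⊆ L.take m
  deep : ∀ v ∈ R, v ≠ 1 → v ∈ L.take k → v ∉ L.take m →
    r + 1 ≤ L.length - k + E.length + R.idxOf v
  -- `1` heads `R`, so it sits at position `L.length - k + E.length`
  deep_one : 1 ∈ L.take k → 1 ∉ L.take m → r ≤ E.length

theorem CountdownState.init (hX : IsVtx Δ D (L ++ T)) (hT : T <+ [1]) (hD : 2 * r + 2 ≤ D)
    (hΔ : D ≤ Δ) (hm : m + (r + 1) = L.length) (h : LoadState Δ D r L m E R)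
    (hend : E.length = r ∨ Blocked r L m E R) :
    CountdownState Δ D r L m T L.length E R E.length where
  le_length := le_rfl
  steps := by have := h.length_le; omega
  reach := by simpa using h.reach
  sublist := h.sublist
  tail := by
    rcases List.sublist_singleton.mp hT with rfl | rfl
    exacts [List.nil_sublist R, List.singleton_sublist.mpr h.one_mem]
  subset_take := by
    rw [List.take_length]
    exact List.Subset.trans h.subset_early (List.take_subset m L)
  subset_early := h.subset_early
  deep v hvR hv1 _ hvm := by
    rcases hend with hfull | hb
    · have : 1 ≤ R.idxOf v := by
        rw [eq_one_cons_of_sublist_range' h.sublist h.one_mem, List.idxOf_cons_ne _ hv1.symm]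
        omega
      omega
    · have := h.le_idxOf_of_blocked hX hT hD hΔ hm hb hvR hv1 hvm
      omega
  deep_one h1 h1m := by
    rcases hend with hfull | hb
    · exact hfull.ge
    · exact absurd (h.one_mem_take_of_blocked hX hT hD hΔ hm hb (List.take_subset _ L h1)) h1m

theorem CountdownState.isVtx (hΔ : D ≤ Δ) (h : CountdownState Δ D r L m T k E R n) :
    IsVtx Δ D (L.drop k ++ E ++ R) :=
  (isVtx_range' hΔ).of_reachIn h.reach

theorem CountdownState.reachIn_cons (hX : IsVtx Δ D (L ++ T)) (hΔ : D ≤ Δ) (hD : 0 < D)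
    (h : CountdownState Δ D r L m T (k + 1) E R n) (hk : k < L.length) {E' R' : List ℕ}
    (hvac : vacate (L.drop (k + 1) ++ E ++ R) L[k] = L.drop (k + 1) ++ E' ++ R')
    (hidx : L[k] ∈ L.drop (k + 1) ++ E ++ R →
      r + 1 ≤ (L.drop (k + 1) ++ E ++ R).idxOf L[k]) :
    ReachIn (adjR Δ D r) (List.range' 1 D) (L.drop k ++ E' ++ R') (n + 1) := by
  have hadj := adjR_cons_vacate (h.isVtx hΔ) hD
    (hX.2.2 _ (List.mem_append_left T (List.getElem_mem hk))) hidx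
  rw [hvac] at hadj
  convert h.reach.tail hadj using 1
  rw [List.drop_eq_getElem_cons hk]
  rfl

theorem CountdownState.nodup_loaded (hΔ : D ≤ Δ) (h : CountdownState Δ D r L m T k E R n) :
    E.Nodup :=
  (h.isVtx hΔ).2.1.of_append_left.of_append_right

theorem CountdownState.step_of_mem (hX : IsVtx Δ D (L ++ T)) (hΔ : D ≤ Δ) (hD : 0 < D)
    (hm : m + (r + 1) = L.length) (h : CountdownState Δ D r L m T (k + 1) E R n)
    (hk : k < L.length) (hv : L[k] ∈ E) :
    CountdownState Δ D r L m T k (E.erase L[k]) R (n + 1) := by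
  have hL : L.Nodup := hX.2.1.of_append_left
  have hkm : k < m := (hL.getElem_mem_take_iff hk).mp (h.subset_early hv)
  have hvP := hL.getElem_notMem_drop hk
  have hsmall : L.take k ⊆ L.take m := List.take_subset_take_left L hkm.le
  refine ⟨hk.le, by have := h.steps; omega, h.reachIn_cons hX hΔ hD hk ?_ ?_, h.sublist, h.tail,
    List.subset_take_of_subset_take_add_one hk (List.Subset.trans List.erase_subset h.subset_take)
      ((h.nodup_loaded hΔ).not_mem_erase),
    List.Subset.trans List.erase_subset h.subset_early,
    fun v _ _ hvk hvm => absurd (hsmall hvk) hvm, fun h1 h1m => absurd (hsmall h1) h1m⟩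
  · rw [vacate, if_pos (by simp [hv]), List.erase_append_left _ (by simp [hv]),
      List.erase_append_right _ hvP]
  · intro _
    rw [List.append_assoc, List.idxOf_append_of_notMem hvP, List.length_drop]
    omega

theorem CountdownState.length_lt_length (hX : IsVtx Δ D (L ++ T)) (hΔ : D ≤ Δ)
    (h : CountdownState Δ D r L m T (k + 1) E R n) (hk : k < L.length) (hv : L[k] ∉ E) :
    T.length < R.length := by
  have hE := (h.nodup_loaded hΔ).length_le_of_subset
    (List.subset_take_of_subset_take_add_one hk h.subset_take hv)
  have hW := (h.isVtx hΔ).1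
  have hLT : L.length + T.length = D := by simpa using hX.1
  simp only [List.length_append, List.length_drop, List.length_take] at hW hE
  omega

theorem CountdownState.le_idxOf (hX : IsVtx Δ D (L ++ T)) (hlast : L.getLast? ≠ some 1)
    (hm : m + (r + 1) = L.length) (h : CountdownState Δ D r L m T (k + 1) E R n)
    (hk : k < L.length) (hvR : L[k] ∈ R) :
    r + 1 ≤ L.length - (k + 1) + E.length + R.idxOf L[k] := by
  have hL : L.Nodup := hX.2.1.of_append_left
  by_cases hkm : k < m
  · omega
  have hvm : L[k] ∉ L.take m := fun h' => hkm ((hL.getElem_mem_take_iff hk).mp h')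
  have hvk : L[k] ∈ L.take (k + 1) := (hL.getElem_mem_take_iff hk).mpr k.lt_succ_self
  by_cases hv1 : L[k] = 1
  · have hlt : k + 1 < L.length := by
      refine lt_of_le_of_ne hk fun hkL => hlast ?_
      rw [List.getLast?_eq_getElem?, ← hkL, Nat.add_sub_cancel, List.getElem?_eq_getElem hk, hv1]
    have := h.deep_one (hv1 ▸ hvk) (hv1 ▸ hvm)
    omega
  · have := h.deep _ hvR hv1 hvk hvm
    omega

theorem CountdownState.step_of_not_mem (hX : IsVtx Δ D (L ++ T)) (hT : T <+ [1])
    (hlast : L.getLast? ≠ some 1) (hΔ : D ≤ Δ) (hD : 0 < D) (hm : m + (r + 1) = L.length)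
    (h : CountdownState Δ D r L m T (k + 1) E R n) (hk : k < L.length) (hv : L[k] ∉ E) :
    CountdownState Δ D r L m T k E (vacate R L[k]) (n + 1) := by
  have hR : R.Nodup := (h.isVtx hΔ).2.1.of_append_right
  have hvP := hX.2.1.of_append_left.getElem_notMem_drop hk
  have hRlen := h.length_lt_length hX hΔ hk hv
  refine ⟨hk.le, by have := h.steps; omega, h.reachIn_cons hX hΔ hD hk ?_ ?_,
    vacate_sublist.trans h.sublist, ?_,
    List.subset_take_of_subset_take_add_one hk h.subset_take hv, h.subset_early, ?_,
    fun h1 h1m => h.deep_one (List.take_subset_take_left L k.le_succ h1) h1m⟩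
  · exact vacate_append (by simp [hvP, hv]) (List.ne_nil_of_length_pos (by omega))
  · intro hvW
    rw [List.idxOf_append_of_notMem (by simp [hvP, hv]), List.length_append, List.length_drop]
    exact h.le_idxOf hX hlast hm hk (by simpa [hvP, hv] using hvW)
  · rcases List.sublist_singleton.mp hT with rfl | rfl
    · exact List.nil_sublist _
    · have hvT : L[k] ≠ 1 := fun hv1 =>
        List.disjoint_of_nodup_append hX.2.1 (List.getElem_mem hk) (by simp [hv1])
      exact List.singleton_sublist.mpr (one_mem_vacate h.sublist
        (List.singleton_sublist.mp h.tail) hvT (by simpa using Nat.succ_le_of_lt hRlen))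
  · intro w hw hw1 hwk hwm
    have := h.deep w (vacate_sublist.subset hw) hw1
      (List.take_subset_take_left L k.le_succ hwk) hwm
    have := idxOf_le_idxOf_vacate_add_one hR hw
    omega

theorem CountdownState.exists_reachIn (hX : IsVtx Δ D (L ++ T)) (hT : T <+ [1])
    (hlast : L.getLast? ≠ some 1) (hΔ : D ≤ Δ) (hD : 0 < D) (hm : m + (r + 1) = L.length) :
    ∀ {k E R n}, CountdownState Δ D r L m T k E R n →
      ∃ n' ≤ r + L.length, ReachIn (adjR Δ D r) (List.range' 1 D) (L ++ T) n'
  | 0, E, R, n, h => by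
    obtain rfl : E = [] := List.subset_nil.mp (by simpa using h.subset_take)
    have hRT : T = R := h.tail.eq_of_length (by
      have h₁ := (h.isVtx hΔ).1
      have h₂ := hX.1
      simp only [List.length_append, List.drop_zero, List.length_nil] at h₁ h₂
      omega)
    exact ⟨n, by simpa using h.steps, by simpa [hRT] using h.reach⟩
  | k + 1, E, R, n, h => by
    have hk : k < L.length := h.le_length
    by_cases hv : L[k] ∈ E
    · exact (h.step_of_mem hX hΔ hD hm hk hv).exists_reachIn hX hT hlast hΔ hD hm
    · exact (h.step_of_not_mem hX hT hlast hΔ hD hm hk hv).exists_reachIn hX hT hlast hΔ hD hm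

end Countdown

/-- for `Δ ≥ D ≥ 2r+2`, from the standard origin `I = 12⋯D` every
vertex can be reached by a directed walk of length at most `D + r`. -/
theorem cpn_restricted_diameter_ub (Δ D r : ℕ) (hD : 2 * r + 2 ≤ D) (hΔ : D ≤ Δ)
    (X : List ℕ) (hX : IsVtx Δ D X) :
    ∃ n ≤ D + r, ∃ w, IsWalk (adjR Δ D r) (List.range' 1 D) X n w := by
  obtain ⟨L, T, rfl, hT, hlast⟩ := hX.2.1.exists_eq_append_of_getLast?_ne 1
  have hL := hX.length_bounds hT
  have hm : L.length - (r + 1) + (r + 1) = L.length := by omega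
  have hinit : LoadState Δ D r L (L.length - (r + 1)) [] (List.range' 1 D) :=
    LoadState.init (by omega)
  obtain ⟨E, R, hload, hend⟩ := hinit.exists_full_or_blocked hX hD hΔ
  obtain ⟨n, hn, hreach⟩ :=
    (CountdownState.init hX hT hD hΔ hm hload hend).exists_reachIn hX hT hlast hΔ (by omega) hm
  exact ⟨n, by omega, hreach⟩
end

section
/- In Γ_Δ(D), for vertices X and Y with Y = 12⋯D and 0 < k < D, the distance d(X,Y) = k holds if and only if: (a) the letter D occurs in X, say x_j = D; (b) every letter among x_1,…,x_j occurs in Y (i.e., is at most D); and (c) (k+1, k+2, …, D) is a subsequence of X but (k, k+1, …, D) is not. -/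
/-!
Every arc `U → V` makes `V.tail` a subsequence of `U`, so a walk of length `n` from `X` to
`12⋯D` forces `(n+1, …, D)` to be a subsequence of `X`. Conversely, once `(k+1, …, D)` is a
subsequence of `X`, bringing `k, k-1, …, 1` to the front one arc at a time reaches `12⋯D` in at
most `k` steps; a shift drops the last letter, and condition (a) guarantees that this letter is
not `D`. Finally, a walk shorter than `D` never moves `D` to the front, so a letter larger than
`D` standing before `D` in `X` would still stand before it in `12⋯D`.
-/

namespace List

variable {α : Type*}

theorem Nodup.getLast_notMem_dropLast {l : List α} (hl : l.Nodup) (h : l ≠ []) :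
    l.getLast h ∉ l.dropLast := by
  rw [← dropLast_append_getLast h, nodup_append] at hl
  exact fun hmem => hl.2.2 _ hmem _ (mem_singleton_self _) rfl

theorem Sublist.sublist_dropLast {l L : List α} (h : l <+ L) (hl : l ≠ []) (hL : L ≠ [])
    (hne : l.getLast hl ≠ L.getLast hL) : l <+ L.dropLast := by
  rw [← dropLast_append_getLast hL] at h
  obtain ⟨l₁, l₂, rfl, h₁, h₂⟩ := sublist_append_iff.1 h
  rcases sublist_singleton.1 h₂ with rfl | rfl
  · simpa using h₁
  · simp at hne

theorem range'_sublist_range'_of_le {s t m n : ℕ} (hst : s ≤ t) (h : t + n = s + m) :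
    range' t n <+ range' s m := by
  have hdrop : range' t n = (range' s m).drop (t - s) := by
    rw [drop_range']
    congr 1 <;> omega
  exact hdrop ▸ drop_sublist _ _

end List

open List

section Walk

variable {V : Type*} {A : V → V → Prop} {u v : V}

theorem IsWalk.cons {u' : V} {n : ℕ} {w : ℕ → V} (huu' : A u u') (hw : IsWalk A u' v n w) :
    IsWalk A u v (n + 1) fun | 0 => u | i + 1 => w i := by
  refine ⟨rfl, hw.2.1, ?_⟩
  rintro (_ | i) hi
  · simpa [hw.1] using huu'
  · exact hw.2.2 i (by omega)

theorem cpDist_le {n : ℕ} {w : ℕ → V} (hw : IsWalk A u v n w) : cpDist A u v ≤ n :=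
  Nat.sInf_le ⟨w, hw⟩

theorem exists_isWalk_cpDist (h : 0 < cpDist A u v) : ∃ w, IsWalk A u v (cpDist A u v) w := by
  refine Nat.sInf_mem (s := {n | ∃ w, IsWalk A u v n w}) ?_
  by_contra hempty
  rw [Set.not_nonempty_iff_eq_empty] at hempty
  simp [cpDist, hempty] at h

end Walk

section CyclePrefix

variable {Δ D r : ℕ} {U V X : List ℕ}

theorem adjR.eq_cons_erase_or_eq_cons_dropLast (h : adjR Δ D r U V) :
    (∃ a, V = a :: U.erase a) ∨ ∃ y, V = y :: U.dropLast := by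
  rcases h.2.2 with ⟨j, -, hj, rfl⟩ | ⟨y, -, rfl⟩
  · have hjU : j < U.length := h.1.1 ▸ hj
    refine .inl ⟨U[j], ?_⟩
    rw [getD_eq_getElem _ _ hjU, h.1.2.1.erase_getElem]
  · exact .inr ⟨y, rfl⟩

theorem adjR.tail_sublist (h : adjR Δ D r U V) : V.tail <+ U := by
  rcases h.eq_cons_erase_or_eq_cons_dropLast with ⟨a, rfl⟩ | ⟨y, rfl⟩
  · exact erase_sublist
  · exact dropLast_sublist U

theorem adjR.pair_sublist (h : adjR Δ D r U V) {a b : ℕ} (hab : [a, b] <+ U)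
    (hb : b ∈ V.tail) : [a, b] <+ V := by
  have hV := h.2.1.2.1
  rcases h.eq_cons_erase_or_eq_cons_dropLast with ⟨e, rfl⟩ | ⟨y, rfl⟩
  · have hbe : b ≠ e := by rintro rfl; exact (nodup_cons.1 hV).1 hb
    by_cases hae : a = e
    · subst hae
      exact (singleton_sublist.2 hb).cons_cons a
    · have := hab.erase e
      rw [erase_of_not_mem (by simp [Ne.symm hae, Ne.symm hbe])] at this
      exact this.cons e
  · have hU : U ≠ [] := by rintro rfl; simp at hab
    have hbU : b ≠ U.getLast hU := fun hbl => h.1.2.1.getLast_notMem_dropLast hU (hbl ▸ hb)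
    exact (hab.sublist_dropLast (by simp) hU (by simpa using hbU)).cons y

theorem drop_sublist_of_adjR_chain {n : ℕ} {w : ℕ → List ℕ}
    (hw : ∀ i < n, adjR Δ D r (w i) (w (i + 1))) {s t : ℕ} (hst : s ≤ t) (htn : t ≤ n) :
    (w t).drop (t - s) <+ w s := by
  induction t, hst using Nat.le_induction with
  | base => simp
  | succ t hst ih =>
    have htail := ((hw t (by omega)).tail_sublist.drop (t - s)).trans (ih (by omega))
    rwa [← drop_one, drop_drop, show 1 + (t - s) = t + 1 - s by omega] at htail

theorem IsWalk.range'_sublist {n : ℕ} {w : ℕ → List ℕ}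
    (hw : IsWalk (adjR Δ D r) X (range' 1 D) n w) : range' (n + 1) (D - n) <+ X := by
  have h := drop_sublist_of_adjR_chain hw.2.2 (Nat.zero_le n) le_rfl
  rwa [hw.1, hw.2.1, drop_range', Nat.sub_zero, mul_one, Nat.add_comm] at h

def NoLargerBefore (b : ℕ) (X : List ℕ) : Prop :=
  ∀ c, b < c → ¬ [c, b] <+ X

theorem noLargerBefore_iff_pairwise {b : ℕ} :
    NoLargerBefore b X ↔ X.Pairwise fun x y => y = b → x ≤ b := by
  rw [pairwise_iff_forall_sublist]
  refine ⟨fun h x y hxy hy => ?_, fun h c hc hcb => (h hcb rfl).not_gt hc⟩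
  subst hy
  exact not_lt.1 fun hx => h x hx hxy

theorem exists_getD_eq_iff_noLargerBefore {b : ℕ} (hX : X.Nodup) :
    (∃ j < X.length, X.getD j 0 = b ∧ ∀ i ≤ j, X.getD i 0 ≤ b) ↔
      b ∈ X ∧ NoLargerBefore b X := by
  simp only [noLargerBefore_iff_pairwise, pairwise_iff_getElem]
  constructor
  · rintro ⟨j, hj, hjb, hle⟩
    rw [getD_eq_getElem _ _ hj] at hjb
    refine ⟨hjb ▸ getElem_mem hj, fun i i' hi hi' hii' hi'b => ?_⟩
    have : i' = j := (hX.getElem_inj_iff).1 (hi'b.trans hjb.symm)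
    simpa only [getD_eq_getElem _ _ hi] using hle i (by omega)
  · rintro ⟨hbX, hpw⟩
    have hj := idxOf_lt_length_iff.2 hbX
    refine ⟨X.idxOf b, hj, by rw [getD_eq_getElem _ _ hj, getElem_idxOf], fun i hi => ?_⟩
    rw [getD_eq_getElem _ _ (by omega)]
    rcases hi.lt_or_eq with hi | rfl
    · exact hpw i _ _ hj hi (getElem_idxOf hj)
    · exact (getElem_idxOf hj).le

theorem NoLargerBefore.cons {b a : ℕ} {Z : List ℕ} (hX : NoLargerBefore b X) (hZ : Z <+ X)
    (hab : a ≤ b) : NoLargerBefore b (a :: Z) := by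
  intro c hc hcb
  rcases sublist_cons_iff.1 hcb with h | ⟨r, hr, -⟩
  · exact hX c hc (h.trans hZ)
  · cases hr; omega

theorem IsWalk.noLargerBefore {n : ℕ} {w : ℕ → List ℕ}
    (hw : IsWalk (adjR Δ D r) X (range' 1 D) n w) (hn : n < D) : NoLargerBefore D X := by
  intro c hc hcX
  have hpair : ∀ t ≤ n, [c, D] <+ w t := by
    intro t ht
    induction t with
    | zero => rwa [hw.1]
    | succ t ih =>
      have hDtail : D ∈ (w (t + 1)).tail := by
        have h := (drop_sublist_of_adjR_chain hw.2.2 ht le_rfl).drop 1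
        rw [hw.2.1, drop_drop, drop_range', drop_one] at h
        exact h.subset (by simp only [mem_range'_1]; omega)
      exact (hw.2.2 t (by omega)).pair_sublist (ih (by omega)) hDtail
  have hcY := (hpair n le_rfl).subset (mem_cons_self ..)
  rw [hw.2.1, mem_range'_1] at hcY
  omega

theorem IsVtx.of_perm {Y : List ℕ} (hX : IsVtx Δ D X) (hXY : X ~ Y) : IsVtx Δ D Y :=
  ⟨hXY.length_eq ▸ hX.1, hXY.nodup_iff.1 hX.2.1, fun y hy => hX.2.2 y (hXY.mem_iff.2 hy)⟩

theorem IsVtx.mem_of_forall_le (hX : IsVtx Δ D X) (hle : ∀ x ∈ X, x ≤ D) {a : ℕ}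
    (ha : 1 ≤ a) (haD : a ≤ D) : a ∈ X := by
  have hsub : X.toFinset ⊆ Finset.Icc 1 D := fun x hx => by
    rw [mem_toFinset] at hx
    exact Finset.mem_Icc.2 ⟨(hX.2.2 x hx).1, hle x hx⟩
  have hcard : (Finset.Icc 1 D).card ≤ X.toFinset.card := by
    rw [toFinset_card_of_nodup hX.2.1, hX.1, Nat.card_Icc, Nat.add_sub_cancel]
  rw [← mem_toFinset, Finset.eq_of_subset_of_card_le hsub hcard]
  exact Finset.mem_Icc.2 ⟨ha, haD⟩

theorem adjR_cons_erase {a : ℕ} (hX : IsVtx Δ D X) (ha : a ∈ X) (hr : r + 1 ≤ X.idxOf a) :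
    adjR Δ D r X (a :: X.erase a) := by
  have hj := idxOf_lt_length_iff.2 ha
  refine ⟨hX, hX.of_perm (perm_cons_erase ha), .inl ⟨X.idxOf a, hr, hX.1 ▸ hj, ?_⟩⟩
  rw [getD_eq_getElem _ _ hj, getElem_idxOf, ← hX.2.1.erase_getElem _ hj, getElem_idxOf]

theorem adjR_cons_dropLast {a : ℕ} (hX : IsVtx Δ D X) (hD : 0 < D) (ha : a ∉ X)
    (ha1 : 1 ≤ a) (haΔ : a ≤ Δ + 1) : adjR Δ D r X (a :: X.dropLast) := by
  refine ⟨hX, ⟨?_, ?_, ?_⟩, .inr ⟨a, ha, rfl⟩⟩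
  · simp only [length_cons, length_dropLast, hX.1]
    omega
  · exact nodup_cons.2 ⟨fun h => ha (dropLast_subset X h), hX.2.1.sublist (dropLast_sublist X)⟩
  · rintro x (_ | ⟨_, hx⟩)
    · exact ⟨ha1, haΔ⟩
    · exact hX.2.2 x (dropLast_subset X hx)

/-- If `D` were the last letter of `X`, all letters of `X` would be at most `D`, so `X` would
be a permutation of `12⋯D`. -/
theorem NoLargerBefore.getLast_ne (hX : IsVtx Δ D X) (hgood : NoLargerBefore D X) {a : ℕ}
    (ha : a ∉ X) (ha1 : 1 ≤ a) (haD : a ≤ D) (hne : X ≠ []) : X.getLast hne ≠ D := by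
  intro hlast
  refine ha (hX.mem_of_forall_le (fun x hx => ?_) ha1 haD)
  by_cases hxD : x = D
  · exact hxD.le
  have hxX : x ∈ X.dropLast := mem_dropLast_of_mem_of_ne_getLast hx (hlast ▸ hxD)
  refine not_lt.1 fun hDx => hgood x hDx ?_
  rw [← dropLast_append_getLast hne, hlast]
  exact (singleton_sublist.2 hxX).append (Sublist.refl [D])

/-- `a` is rotated to the front if it occurs in `X` (it is not already first, by `hnT`), and
shifted in otherwise (the dropped last letter is not `D`, by `NoLargerBefore.getLast_ne`). -/
theorem exists_adjR_cons (hΔ : D ≤ Δ) (hX : IsVtx Δ D X) (hgood : NoLargerBefore D X) {a : ℕ}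
    (ha1 : 1 ≤ a) (haD : a < D) (hT : range' (a + 1) (D - a) <+ X)
    (hnT : ¬ a :: range' (a + 1) (D - a) <+ X) :
    ∃ Z, adjR Δ D 0 X (a :: Z) ∧ Z <+ X ∧ range' (a + 1) (D - a) <+ Z := by
  have haT : a ∉ range' (a + 1) (D - a) := by simp
  by_cases haX : a ∈ X
  · refine ⟨X.erase a, adjR_cons_erase hX haX ?_, erase_sublist, ?_⟩
    · by_contra h0
      obtain ⟨b, X', rfl⟩ := exists_cons_of_ne_nil (ne_nil_of_mem haX)
      obtain rfl : b = a := by by_contra hba; simp [hba] at h0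
      rcases sublist_cons_iff.1 hT with hT' | ⟨r, hr, -⟩
      · exact hnT (hT'.cons_cons b)
      · exact haT (hr ▸ mem_cons_self ..)
    · simpa [erase_of_not_mem haT] using hT.erase a
  · have hne : X ≠ [] := by rintro rfl; simp [hX.1.symm] at haD
    have hT0 : range' (a + 1) (D - a) ≠ [] := by simp only [ne_eq, range'_eq_nil_iff]; omega
    refine ⟨X.dropLast, adjR_cons_dropLast hX (by omega) haX ha1 (by omega),
      dropLast_sublist X, hT.sublist_dropLast hT0 hne ?_⟩
    rw [getLast_range', show a + 1 + (D - a) - 1 = D by omega]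
    exact (hgood.getLast_ne hX haX ha1 haD.le hne).symm

theorem exists_isWalk_le_of_range'_sublist (hΔ : D ≤ Δ) {k : ℕ} (hk : k < D)
    (hX : IsVtx Δ D X) (hgood : NoLargerBefore D X) (hT : range' (k + 1) (D - k) <+ X) :
    ∃ n ≤ k, ∃ w, IsWalk (adjR Δ D 0) X (range' 1 D) n w := by
  induction k generalizing X with
  | zero =>
    have hXY := hT.eq_of_length (by simp [hX.1])
    exact ⟨0, le_rfl, fun _ => X, rfl, hXY.symm, fun i hi => absurd hi (Nat.not_lt_zero i)⟩
  | succ k ih =>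
    have hrun : range' (k + 1) (D - k) = (k + 1) :: range' (k + 1 + 1) (D - (k + 1)) := by
      rw [show D - k = D - (k + 1) + 1 by omega, range'_succ]
    by_cases hT' : range' (k + 1) (D - k) <+ X
    · obtain ⟨n, hn, hw⟩ := ih (by omega) hX hgood hT'
      exact ⟨n, by omega, hw⟩
    rw [hrun] at hT'
    obtain ⟨Z, hadj, hZ, hTZ⟩ := exists_adjR_cons hΔ hX hgood (by omega) hk hT hT'
    obtain ⟨n, hn, w, hw⟩ := ih (by omega) hadj.2.1 (hgood.cons hZ (by omega))
      (hrun ▸ hTZ.cons_cons _)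
    exact ⟨n + 1, by omega, _, hw.cons hadj⟩

theorem cpDist_eq_of_range'_sublist (hΔ : D ≤ Δ) {k : ℕ} (hk : k < D) (hX : IsVtx Δ D X)
    (hgood : NoLargerBefore D X) (hT : range' (k + 1) (D - k) <+ X)
    (hnT : ¬ range' k (D - k + 1) <+ X) : cpDist (adjR Δ D 0) X (range' 1 D) = k := by
  have hlong : ∀ n w, IsWalk (adjR Δ D 0) X (range' 1 D) n w → k ≤ n := fun n w hw =>
    not_lt.1 fun hnk => hnT ((range'_sublist_range'_of_le (by omega) (by omega)).trans
      hw.range'_sublist)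
  obtain ⟨n, hn, w, hw⟩ := exists_isWalk_le_of_range'_sublist hΔ hk hX hgood hT
  exact le_antisymm ((cpDist_le hw).trans hn)
    (le_csInf ⟨n, w, hw⟩ fun m ⟨w', hw'⟩ => hlong m w' hw')

end CyclePrefix

/-- in `Γ_Δ(D)` with `Y = 12⋯D` and `0 < k < D`, the distance
`d(X, Y) = k` iff (a) the letter `D` occurs in `X`, say at position `j`,
(b) every letter among `x_1, …, x_j` is at most `D`, and (c) `(k+1, …, D)` is a
subsequence of `X` but `(k, k+1, …, D)` is not. -/
theorem dist_eq_iff_of_lt (Δ D k : ℕ) (hΔ : D ≤ Δ) (hk0 : 0 < k) (hkD : k < D)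
    (X : List ℕ) (hX : IsVtx Δ D X) :
    cpDist (adjR Δ D 0) X (List.range' 1 D) = k ↔
      ((∃ j < D, X.getD j 0 = D ∧ ∀ i ≤ j, X.getD i 0 ≤ D) ∧
        (List.range' (k + 1) (D - k)).Sublist X ∧
        ¬ (List.range' k (D - k + 1)).Sublist X) := by
  have ha : (∃ j < D, X.getD j 0 = D ∧ ∀ i ≤ j, X.getD i 0 ≤ D) ↔
      D ∈ X ∧ NoLargerBefore D X :=
    hX.1 ▸ exists_getD_eq_iff_noLargerBefore hX.2.1
  rw [ha]
  constructor
  · intro hdist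
    obtain ⟨w, hw⟩ := exists_isWalk_cpDist (hdist ▸ hk0)
    rw [hdist] at hw
    have hT := hw.range'_sublist
    have hgood := hw.noLargerBefore hkD
    refine ⟨⟨hT.subset (by simp only [mem_range'_1]; omega), hgood⟩, hT, fun hnT => ?_⟩
    obtain ⟨n, hn, w', hw'⟩ := exists_isWalk_le_of_range'_sublist hΔ (k := k - 1) (by omega) hX
      hgood (by rwa [show k - 1 + 1 = k by omega, show D - (k - 1) = D - k + 1 by omega])
    have := cpDist_le hw'
    omega
  · rintro ⟨⟨-, hgood⟩, hT, hnT⟩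
    exact cpDist_eq_of_range'_sublist hΔ hkD hX hgood hT hnT
end
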